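/- If $n$ is odd, the tangent bundle $\tau(K_n)$ is isomorphic to the trivial rank-$n$ real vector bundle. If $n$ is even, then $\tau(K_n) \cong \eta \oplus (n-1)\varepsilon$, where $\varepsilon$ is the trivial line bundle and $\eta$ is the real line bundle associated to the double cover $(S^1)^n \to K_n$ (so $w_1(\eta) = R$), and moreover $\tau(K_n) \oplus \tau(K_n)$ is isomorphic to the trivial rank-$2n$ bundle. -/

import Mathlib

/-!
The involution `τ` of `(S¹)ⁿ` acts on the invariant frame by `dτ = diag(-1, …, -1, 1)` and sends
the last coordinate `c = zₙ` to `-c`. A bundle built from such a twist is the quotient of a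
trivial bundle over the torus by `(z, v) ∼ (τ z, J v)`, and a continuous family of fibrewise
isomorphisms `F z` with `F (τ z) ∘ J = J' ∘ F z` descends to a bundle isomorphism. If `J = -1`
on a summand carrying a complex structure, multiplication by `c` there is such a family, because
`(-c) (-u) = c u`. For odd `n` the `(-1)`-eigenspace `ℝⁿ⁻¹ ≅ ℂ^((n-1)/2)` of `dτ` is complex, so
`τ(Kₙ)` is trivial. For even `n` one negated coordinate is left over and spans `η`, while the
remaining `n - 1` coordinates are trivialized as in the odd case. In `τ ⊕ τ` the eigenspace
`ℝⁿ⁻¹ ⊕ ℝⁿ⁻¹ ≅ ℂⁿ⁻¹` is complex for every `n`.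
-/

noncomputable section

/-- Complex conjugation on the unit circle. -/
def Circle.conj (z : Circle) : Circle :=
  ⟨starRingEnd ℂ z, by
    have := z.2
    simp only [Submonoid.unitSphere, Submonoid.mem_mk, Subsemigroup.mem_mk] at *
    simp_all [mem_sphere_zero_iff_norm]⟩

/-- Negation on the unit circle. -/
def Circle.neg (z : Circle) : Circle :=
  ⟨-(z : ℂ), by
    have := z.2
    simp only [Submonoid.unitSphere, Submonoid.mem_mk, Subsemigroup.mem_mk] at *
    simp_all [mem_sphere_zero_iff_norm]⟩

/-- The torus `(S¹)ⁿ`. -/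
abbrev Torus (n : ℕ) : Type := Fin n → Circle

/-- The involution `(z₁,…,z_{n-1},z_n) ↦ (z̄₁,…,z̄_{n-1},-z_n)` on the torus. -/
def kleinInvolution (n : ℕ) (z : Torus n) : Torus n :=
  fun i => if (i : ℕ) + 1 = n then (z i).neg else (z i).conj

/-- The identification defining the `n`-dimensional Klein bottle. -/
def KleinRel (n : ℕ) (z w : Torus n) : Prop := w = kleinInvolution n z

/-- The `n`-dimensional Klein bottle `Kₙ = (S¹)ⁿ/((z,z_n) ∼ (z̄,-z_n))`. -/
def Klein (n : ℕ) : Type := Quot (KleinRel n)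

instance (n : ℕ) : TopologicalSpace (Klein n) := instTopologicalSpaceQuot

/-- The differential of the Klein involution in the standard (invariant) trivialization
of the tangent bundle of the torus: `(t₁,…,tₙ) ↦ (-t₁,…,-t_{n-1},tₙ)`. -/
def dKleinInvolution (n : ℕ) (t : Fin n → ℝ) : Fin n → ℝ :=
  fun i => if (i : ℕ) + 1 = n then t i else -t i

/-- The relation defining the total space of the tangent bundle `τ(Kₙ)`, as the quotient
of `T((S¹)ⁿ) = (S¹)ⁿ × ℝⁿ` by the differential of the Klein involution. -/
def TangentRel (n : ℕ) (p q : Torus n × (Fin n → ℝ)) : Prop :=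
  q = (kleinInvolution n p.1, dKleinInvolution n p.2)

/-- The total space of `τ(Kₙ)`. -/
def KleinTangent (n : ℕ) : Type := Quot (TangentRel n)

instance (n : ℕ) : TopologicalSpace (KleinTangent n) := instTopologicalSpaceQuot

/-- The relation defining the total space of `η ⊕ (n-1)ε`, where `η` is the line bundle
associated to the double cover (total space `(ℝ × (S¹)ⁿ)/((t,z) ∼ (-t, τz))`) and `ε` is
the trivial line bundle. -/
def EtaPlusTrivialRel (n : ℕ) (p q : Torus n × (ℝ × (Fin (n - 1) → ℝ))) : Prop :=
  q = (kleinInvolution n p.1, (-p.2.1, p.2.2))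

/-- The total space of `η ⊕ (n-1)ε`. -/
def EtaPlusTrivial (n : ℕ) : Type := Quot (EtaPlusTrivialRel n)

instance (n : ℕ) : TopologicalSpace (EtaPlusTrivial n) := instTopologicalSpaceQuot

/-- The relation defining the total space of `τ(Kₙ) ⊕ τ(Kₙ)`. -/
def DoubleTangentRel (n : ℕ) (p q : Torus n × ((Fin n → ℝ) × (Fin n → ℝ))) : Prop :=
  q = (kleinInvolution n p.1, (dKleinInvolution n p.2.1, dKleinInvolution n p.2.2))

/-- The total space of `τ(Kₙ) ⊕ τ(Kₙ)`. -/
def DoubleTangent (n : ℕ) : Type := Quot (DoubleTangentRel n)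

instance (n : ℕ) : TopologicalSpace (DoubleTangent n) := instTopologicalSpaceQuot

open Function

section TwistedQuotient

variable {X V V' : Type*}

def InvolutionRel (σ : X → X) (x y : X) : Prop := y = σ x

/-- The quotient by this relation is the flat bundle over `X / σ` with monodromy `J`;
`TangentRel`, `EtaPlusTrivialRel` and `DoubleTangentRel` are instances of it. -/
def TwistRel (σ : X → X) (J : V → V) (p q : X × V) : Prop := q = (σ p.1, J p.2)

theorem Function.Involutive.quot_mk_involutionRel_eq_iff {σ : X → X} (hσ : Involutive σ)
    {x y : X} : Quot.mk (InvolutionRel σ) x = Quot.mk _ y ↔ y = x ∨ y = σ x := by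
  refine ⟨fun h => ?_, ?_⟩
  · have hequiv : Equivalence fun x y : X => y = x ∨ y = σ x :=
      { refl := fun _ => Or.inl rfl
        symm := by rintro x y (rfl | rfl) <;> simp [hσ _]
        trans := by rintro x y z (rfl | rfl) (rfl | rfl) <;> simp [hσ _] }
    exact hequiv.eqvGen_iff.mp
      (Relation.EqvGen.mono (fun _ _ => Or.inr) _ _ (Quot.eqvGen_exact h))
  · rintro (rfl | rfl)
    exacts [rfl, Quot.sound rfl]

variable [TopologicalSpace X] [TopologicalSpace V] [TopologicalSpace V']

theorem exists_homeomorph_quot_twistRel (σ : X → X) {J : V → V} {J' : V' → V'}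
    (F : X → V ≃ V') (hF : ∀ x v, F (σ x) (J v) = J' (F x v))
    (hFc : Continuous fun p : X × V => F p.1 p.2)
    (hFc' : Continuous fun p : X × V' => (F p.1).symm p.2) :
    ∃ e : Quot (TwistRel σ J) ≃ₜ Quot (TwistRel σ J'),
      ∀ x v, e (Quot.mk _ (x, v)) = Quot.mk _ (x, F x v) := by
  have hF' : ∀ x w, (F (σ x)).symm (J' w) = J ((F x).symm w) := fun x w => by
    rw [Equiv.symm_apply_eq, hF, Equiv.apply_symm_apply]
  refine ⟨{ toFun := Quot.map (fun p => (p.1, F p.1 p.2)) ?_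
            invFun := Quot.map (fun p => (p.1, (F p.1).symm p.2)) ?_
            left_inv := ?_, right_inv := ?_
            continuous_toFun := continuous_quot_map _ (continuous_fst.prodMk hFc)
            continuous_invFun := continuous_quot_map _ (continuous_fst.prodMk hFc') },
    fun x v => rfl⟩
  · rintro p _ rfl
    simp only [TwistRel, hF]
  · rintro p _ rfl
    simp only [TwistRel, hF']
  · rintro ⟨x, v⟩
    simp only [Quot.map, Equiv.symm_apply_apply]
  · rintro ⟨x, w⟩
    simp only [Quot.map, Equiv.apply_symm_apply]

variable {σ : X → X}

theorem Function.Involutive.isOpenQuotientMap_quot_mk (hσ : Involutive σ) (hσc : Continuous σ) :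
    IsOpenQuotientMap (Quot.mk (InvolutionRel σ)) := by
  refine ⟨Quot.mk_surjective, continuous_quot_mk, fun U hU => ?_⟩
  have hsat : Quot.mk (InvolutionRel σ) ⁻¹' (Quot.mk _ '' U) = U ∪ σ ⁻¹' U := by
    ext x
    simp only [Set.mem_preimage, Set.mem_image, Set.mem_union, hσ.quot_mk_involutionRel_eq_iff]
    constructor
    · rintro ⟨y, hy, rfl | rfl⟩
      exacts [Or.inl hy, Or.inr (by rwa [hσ])]
    · rintro (h | h)
      exacts [⟨x, h, Or.inl rfl⟩, ⟨σ x, h, Or.inr (hσ x).symm⟩]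
  rw [← isQuotientMap_quot_mk.isOpen_preimage, hsat]
  exact hU.union (hU.preimage hσc)

theorem Function.Involutive.exists_homeomorph_quot_twistRel_id (hσ : Involutive σ)
    (hσc : Continuous σ) :
    ∃ e : Quot (TwistRel σ (id : V → V)) ≃ₜ Quot (InvolutionRel σ) × V,
      ∀ x v, e (Quot.mk _ (x, v)) = (Quot.mk _ x, v) := by
  have hinv : ∀ v x y, InvolutionRel σ x y →
      Quot.mk (TwistRel σ (id : V → V)) (x, v) = Quot.mk _ (y, v) := by
    rintro v x _ rfl
    exact Quot.sound rfl
  refine ⟨{ toFun := Quot.lift (fun p => (Quot.mk _ p.1, p.2)) ?_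
            invFun := fun q => Quot.lift (fun x => Quot.mk _ (x, q.2)) (hinv q.2) q.1
            left_inv := ?_, right_inv := ?_
            continuous_toFun := continuous_quot_lift _
              ((continuous_quot_mk.comp continuous_fst).prodMk continuous_snd)
            continuous_invFun := ?_ },
    fun x v => rfl⟩
  · rintro p _ rfl
    exact Prod.ext (Quot.sound rfl) rfl
  · rintro ⟨x, v⟩
    rfl
  · rintro ⟨⟨x⟩, v⟩
    rfl
  · exact ((hσ.isOpenQuotientMap_quot_mk hσc).prodMap .id).isQuotientMap.continuous_iff.mpr
      continuous_quot_mk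

end TwistedQuotient

section FrameRotation

variable {U W V : Type*} [AddCommGroup U] [Module ℂ U] [Module ℝ U] [IsScalarTower ℝ ℂ U]
  [TopologicalSpace U] [AddCommGroup W] [Module ℝ W] [TopologicalSpace W]
  [AddCommGroup V] [Module ℝ V] [TopologicalSpace V]

def frameRotation (Φ : V ≃L[ℝ] U × W) (c : Circle) : V ≃ₗ[ℝ] V :=
  Φ.toLinearEquiv ≪≫ₗ
    ((LinearEquiv.smulOfNeZero ℂ U c c.coe_ne_zero).restrictScalars ℝ).prodCongr
      (LinearEquiv.refl ℝ W) ≪≫ₗ Φ.toLinearEquiv.symm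

variable (Φ : V ≃L[ℝ] U × W)

theorem frameRotation_apply (c : Circle) (v : V) :
    frameRotation Φ c v = Φ.symm ((c : ℂ) • (Φ v).1, (Φ v).2) := rfl

theorem frameRotation_symm_apply (c : Circle) (v : V) :
    (frameRotation Φ c).symm v = Φ.symm ((c : ℂ)⁻¹ • (Φ v).1, (Φ v).2) := rfl

theorem frameRotation_neg {J : V → V} (hΦ : ∀ v, Φ (J v) = (-(Φ v).1, (Φ v).2))
    (c : Circle) (v : V) : frameRotation Φ c.neg (J v) = frameRotation Φ c v := by
  simp only [frameRotation_apply, hΦ]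
  rw [show ((c.neg : Circle) : ℂ) = -c from rfl, neg_smul_neg]

theorem continuous_frameRotation [ContinuousSMul ℂ U] :
    Continuous fun p : Circle × V => frameRotation Φ p.1 p.2 := by
  simp only [frameRotation_apply]
  fun_prop

theorem continuous_frameRotation_symm [ContinuousSMul ℂ U] :
    Continuous fun p : Circle × V => (frameRotation Φ p.1).symm p.2 := by
  simp only [frameRotation_symm_apply, ← Circle.coe_inv]
  fun_prop

end FrameRotation

section KleinInvolution

theorem kleinInvolution_involutive (n : ℕ) : Involutive (kleinInvolution n) := by
  intro z
  funext i
  by_cases h : (i : ℕ) + 1 = n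
  · simp only [kleinInvolution, if_pos h]
    exact Subtype.ext (neg_neg _)
  · simp only [kleinInvolution, if_neg h]
    exact Subtype.ext (Complex.conj_conj _)

theorem continuous_kleinInvolution (n : ℕ) : Continuous (kleinInvolution n) := by
  refine continuous_pi fun i => ?_
  by_cases h : (i : ℕ) + 1 = n
  · simp only [kleinInvolution, if_pos h]
    exact (continuous_neg.comp continuous_subtype_val).subtype_mk _ |>.comp (continuous_apply i)
  · simp only [kleinInvolution, if_neg h]
    exact (Complex.continuous_conj.comp continuous_subtype_val).subtype_mk _ |>.comp
      (continuous_apply i)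

theorem kleinInvolution_last (k : ℕ) (z : Torus (k + 1)) :
    kleinInvolution (k + 1) z (Fin.last k) = (z (Fin.last k)).neg := by
  simp [kleinInvolution]

variable {V V' : Type*} [AddCommGroup V] [Module ℝ V] [TopologicalSpace V]
  [AddCommGroup V'] [Module ℝ V'] [TopologicalSpace V']

theorem exists_homeomorph_twistRel_kleinInvolution (k : ℕ) {J : V → V} {J' : V' → V'}
    (F : Circle → V ≃ₗ[ℝ] V') (hF : ∀ c v, F c.neg (J v) = J' (F c v))
    (hFc : Continuous fun p : Circle × V => F p.1 p.2)
    (hFc' : Continuous fun p : Circle × V' => (F p.1).symm p.2) :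
    ∃ e : Quot (TwistRel (kleinInvolution (k + 1)) J) ≃ₜ
        Quot (TwistRel (kleinInvolution (k + 1)) J'),
      ∀ (z : Torus (k + 1)) v, e (Quot.mk _ (z, v)) = Quot.mk _ (z, F (z (Fin.last k)) v) := by
  have hlast : Continuous fun z : Torus (k + 1) => z (Fin.last k) := continuous_apply _
  exact exists_homeomorph_quot_twistRel _
    (fun z : Torus (k + 1) => (F (z (Fin.last k))).toEquiv)
    (fun z v => by rw [kleinInvolution_last]; exact hF _ _)
    (hFc.comp ((hlast.comp continuous_fst).prodMk continuous_snd))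
    (hFc'.comp ((hlast.comp continuous_fst).prodMk continuous_snd))

theorem exists_homeomorph_twistRel_kleinInvolution_prod (k : ℕ) {J : V → V}
    (F : Circle → V ≃ₗ[ℝ] V') (hF : ∀ c v, F c.neg (J v) = F c v)
    (hFc : Continuous fun p : Circle × V => F p.1 p.2)
    (hFc' : Continuous fun p : Circle × V' => (F p.1).symm p.2) :
    ∃ e : Quot (TwistRel (kleinInvolution (k + 1)) J) ≃ₜ Klein (k + 1) × V',
      ∀ (z : Torus (k + 1)) v,
        e (Quot.mk _ (z, v)) = (Quot.mk (KleinRel (k + 1)) z, F (z (Fin.last k)) v) := by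
  obtain ⟨e, he⟩ := exists_homeomorph_twistRel_kleinInvolution k (J' := id) F hF hFc hFc'
  obtain ⟨e', he'⟩ := (kleinInvolution_involutive (k + 1)).exists_homeomorph_quot_twistRel_id
    (V := V') (continuous_kleinInvolution (k + 1))
  exact ⟨e.trans e', fun z v => (congrArg e' (he z v)).trans (he' z _)⟩

end KleinInvolution

section Frames

def splitLast (k : ℕ) : (Fin (k + 1) → ℝ) ≃L[ℝ] (Fin k → ℝ) × ℝ :=
  LinearEquiv.toContinuousLinearEquiv
    { toFun := fun t => (Fin.init t, t (Fin.last k))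
      invFun := fun p => Fin.snoc p.1 p.2
      map_add' := fun _ _ => rfl
      map_smul' := fun _ _ => rfl
      left_inv := Fin.snoc_init_self
      right_inv := fun p => by simp }

theorem splitLast_apply (k : ℕ) (t : Fin (k + 1) → ℝ) :
    splitLast k t = (Fin.init t, t (Fin.last k)) := rfl

def splitHead (k : ℕ) : (Fin (k + 1) → ℝ) ≃L[ℝ] ℝ × (Fin k → ℝ) :=
  LinearEquiv.toContinuousLinearEquiv
    { toFun := fun t => (t 0, Fin.tail t)
      invFun := fun p => Fin.cons p.1 p.2
      map_add' := fun _ _ => rfl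
      map_smul' := fun _ _ => rfl
      left_inv := Fin.cons_self_tail
      right_inv := fun p => by simp }

theorem splitHead_apply (k : ℕ) (t : Fin (k + 1) → ℝ) :
    splitHead k t = (t 0, Fin.tail t) := rfl

def realPairsToComplex (k : ℕ) : ((Fin k → ℝ) × (Fin k → ℝ)) ≃L[ℝ] (Fin k → ℂ) :=
  LinearEquiv.toContinuousLinearEquiv
    { toFun := fun p j => ⟨p.1 j, p.2 j⟩
      invFun := fun w => (fun j => (w j).re, fun j => (w j).im)
      map_add' := fun _ _ => rfl
      map_smul' := fun _ _ => by ext; simp [Complex.ext_iff]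
      left_inv := fun _ => rfl
      right_inv := fun _ => rfl }

def finAddFinToComplex (m : ℕ) : (Fin (m + m) → ℝ) ≃L[ℝ] (Fin m → ℂ) :=
  LinearEquiv.toContinuousLinearEquiv
    { toFun := fun t j => ⟨t (Fin.castAdd m j), t (Fin.natAdd m j)⟩
      invFun := fun w => Fin.append (fun j => (w j).re) (fun j => (w j).im)
      map_add' := fun _ _ => rfl
      map_smul' := fun _ _ => by ext; simp [Complex.ext_iff]
      left_inv := fun _ => Fin.append_castAdd_natAdd
      right_inv := fun _ => funext fun _ => by simp only [Fin.append_left, Fin.append_right] }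

theorem splitLast_dKleinInvolution (k : ℕ) (t : Fin (k + 1) → ℝ) :
    splitLast k (dKleinInvolution (k + 1) t) = (-(splitLast k t).1, (splitLast k t).2) := by
  refine Prod.ext (funext fun i => ?_) ?_
  · simp [splitLast_apply, dKleinInvolution, Fin.init, i.isLt.ne]
  · simp [splitLast_apply, dKleinInvolution]

theorem splitHead_dKleinInvolution (k : ℕ) (t : Fin (k + 2) → ℝ) :
    splitHead (k + 1) (dKleinInvolution (k + 2) t) =
      (-(splitHead (k + 1) t).1, dKleinInvolution (k + 1) (splitHead (k + 1) t).2) := by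
  refine Prod.ext ?_ (funext fun i => ?_)
  · simp [splitHead_apply, dKleinInvolution]
  · simp [splitHead_apply, dKleinInvolution, Fin.tail]

def oddFrame (m : ℕ) : (Fin (m + m + 1) → ℝ) ≃L[ℝ] (Fin m → ℂ) × ℝ :=
  (splitLast (m + m)).trans ((finAddFinToComplex m).prodCongr (.refl ℝ ℝ))

theorem oddFrame_dKleinInvolution (m : ℕ) (t : Fin (m + m + 1) → ℝ) :
    oddFrame m (dKleinInvolution _ t) = (-(oddFrame m t).1, (oddFrame m t).2) := by
  simp only [oddFrame, ContinuousLinearEquiv.trans_apply, ContinuousLinearEquiv.prodCongr_apply,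
    splitLast_dKleinInvolution, map_neg]

def doubleFrame (k : ℕ) :
    ((Fin (k + 1) → ℝ) × (Fin (k + 1) → ℝ)) ≃L[ℝ] (Fin k → ℂ) × (ℝ × ℝ) :=
  ((splitLast k).prodCongr (splitLast k)).trans
    ((ContinuousLinearEquiv.prodProdProdComm ℝ _ _ _ _).trans
      ((realPairsToComplex k).prodCongr (.refl ℝ (ℝ × ℝ))))

theorem doubleFrame_dKleinInvolution (k : ℕ)
    (p : (Fin (k + 1) → ℝ) × (Fin (k + 1) → ℝ)) :
    doubleFrame k (dKleinInvolution _ p.1, dKleinInvolution _ p.2) =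
      (-(doubleFrame k p).1, (doubleFrame k p).2) := by
  simp only [doubleFrame, ContinuousLinearEquiv.trans_apply, ContinuousLinearEquiv.prodCongr_apply,
    splitLast_dKleinInvolution, ContinuousLinearEquiv.prodProdProdComm_apply, ← Prod.neg_mk,
    map_neg]
  rfl

/-- The first coordinate spans `η`; the other `2m + 1` are trivialized as in the odd case. -/
def evenFiber (m : ℕ) (c : Circle) :
    (Fin (m + m + 1 + 1) → ℝ) ≃ₗ[ℝ] ℝ × (Fin (m + m + 1) → ℝ) :=
  (splitHead (m + m + 1)).toLinearEquiv ≪≫ₗ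
    (LinearEquiv.refl ℝ ℝ).prodCongr (frameRotation (oddFrame m) c)

theorem evenFiber_apply (m : ℕ) (c : Circle) (t : Fin (m + m + 1 + 1) → ℝ) :
    evenFiber m c t = ((splitHead _ t).1, frameRotation (oddFrame m) c (splitHead _ t).2) := rfl

theorem evenFiber_symm_apply (m : ℕ) (c : Circle) (p : ℝ × (Fin (m + m + 1) → ℝ)) :
    (evenFiber m c).symm p = (splitHead _).symm (p.1, (frameRotation (oddFrame m) c).symm p.2) :=
  rfl

theorem evenFiber_neg (m : ℕ) (c : Circle) (t : Fin (m + m + 1 + 1) → ℝ) :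
    evenFiber m c.neg (dKleinInvolution _ t) = (-(evenFiber m c t).1, (evenFiber m c t).2) := by
  simp only [evenFiber, LinearEquiv.trans_apply, LinearEquiv.prodCongr_apply,
    ContinuousLinearEquiv.coe_toLinearEquiv, splitHead_dKleinInvolution, LinearEquiv.refl_apply,
    frameRotation_neg _ (oddFrame_dKleinInvolution m)]

theorem continuous_evenFiber (m : ℕ) :
    Continuous fun p : Circle × (Fin (m + m + 1 + 1) → ℝ) => evenFiber m p.1 p.2 := by
  simp only [evenFiber_apply, frameRotation_apply]
  fun_prop

theorem continuous_evenFiber_symm (m : ℕ) :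
    Continuous fun p : Circle × (ℝ × (Fin (m + m + 1) → ℝ)) =>
      (evenFiber m p.1).symm p.2 := by
  simp only [evenFiber_symm_apply, frameRotation_symm_apply, ← Circle.coe_inv]
  fun_prop

end Frames

/-- If `n` is odd, the tangent bundle `τ(Kₙ)` is trivial; if `n` is
even, `τ(Kₙ) ≅ η ⊕ (n-1)ε` where `η` is the line bundle associated to the double cover
`(S¹)ⁿ → Kₙ`, and `τ(Kₙ) ⊕ τ(Kₙ)` is trivial.  (Bundle isomorphisms are homeomorphisms
of total spaces over `Kₙ` which are linear on each fiber.) -/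
theorem klein_tangent_bundle (n : ℕ) (hn : 1 ≤ n) :
    (Odd n →
      ∃ (e : KleinTangent n ≃ₜ Klein n × (Fin n → ℝ))
        (F : (z : Torus n) → (Fin n → ℝ) ≃ₗ[ℝ] (Fin n → ℝ)),
        ∀ (z : Torus n) (t : Fin n → ℝ),
          e (Quot.mk (TangentRel n) (z, t)) = (Quot.mk (KleinRel n) z, F z t)) ∧
    (Even n →
      (∃ (e : KleinTangent n ≃ₜ EtaPlusTrivial n)
        (F : (z : Torus n) → (Fin n → ℝ) ≃ₗ[ℝ] (ℝ × (Fin (n - 1) → ℝ))),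
        ∀ (z : Torus n) (t : Fin n → ℝ),
          e (Quot.mk (TangentRel n) (z, t)) =
            Quot.mk (EtaPlusTrivialRel n) (z, F z t)) ∧
      (∃ (e : DoubleTangent n ≃ₜ Klein n × ((Fin n → ℝ) × (Fin n → ℝ)))
        (F : (z : Torus n) → ((Fin n → ℝ) × (Fin n → ℝ)) ≃ₗ[ℝ] ((Fin n → ℝ) × (Fin n → ℝ))),
        ∀ (z : Torus n) (t : (Fin n → ℝ) × (Fin n → ℝ)),
          e (Quot.mk (DoubleTangentRel n) (z, t)) = (Quot.mk (KleinRel n) z, F z t))) := by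
  refine ⟨fun hodd => ?_, fun heven => ⟨?_, ?_⟩⟩
  · obtain ⟨m, rfl⟩ : ∃ m, n = m + m + 1 := by
      obtain ⟨m, rfl⟩ := hodd
      exact ⟨m, by ring⟩
    obtain ⟨e, he⟩ := exists_homeomorph_twistRel_kleinInvolution_prod (m + m)
      (frameRotation (oddFrame m))
      (frameRotation_neg _ (oddFrame_dKleinInvolution m))
      (continuous_frameRotation _) (continuous_frameRotation_symm _)
    exact ⟨e, _, he⟩
  · obtain ⟨m, rfl⟩ : ∃ m, n = m + m + 1 + 1 := by
      obtain ⟨k, rfl⟩ := heven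
      exact ⟨k - 1, by omega⟩
    obtain ⟨e, he⟩ := exists_homeomorph_twistRel_kleinInvolution (m + m + 1)
      (J' := fun p : ℝ × (Fin (m + m + 1) → ℝ) => (-p.1, p.2))
      (evenFiber m) (evenFiber_neg m)
      (continuous_evenFiber m) (continuous_evenFiber_symm m)
    exact ⟨e, _, he⟩
  · obtain ⟨k, rfl⟩ : ∃ k, n = k + 1 := ⟨n - 1, by omega⟩
    obtain ⟨e, he⟩ := exists_homeomorph_twistRel_kleinInvolution_prod k
      (frameRotation (doubleFrame k))
      (frameRotation_neg _ (doubleFrame_dKleinInvolution k))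
      (continuous_frameRotation _) (continuous_frameRotation_symm _)
    exact ⟨e, _, he⟩
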